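/- arXiv:2207.08904 — 3 statements merged into one kernel-verified Lean document; each statement's English description precedes it below -/
import Mathlib

section
/- Under hypotheses (Q1)–(Q5), for every a ∈ Γ there exists a nonzero f ∈ W such that V_t(f) = a for every t ∈ F. (This is the theorem that for a balanced Seshadri stratification, each element of the common fan of monoids admits a single function which simultaneously represents the corresponding one-dimensional leaf of the quasi-valuation for every linearization of the partial order; it shows that requiring a common leaf basis in the definition of a balanced stratification is redundant.) -/
open Set

/-- The lexicographic order on `ℚ^A` determined by a linear order `t` on `A`:
`u ≤_t v` iff `u = v`, or `u p < v p` where `p` is the `t`-largest element at which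
`u` and `v` differ (equivalently, `u p < v p` and `u`, `v` agree at all `t`-larger elements). -/
def lexLe {A : Type*} (t : LinearOrder A) (u v : A → ℚ) : Prop :=
  u = v ∨ ∃ p, u p < v p ∧ ∀ q, t.lt p q → u q = v q

/-- The strict lexicographic order determined by `t`. -/
def lexLt {A : Type*} (t : LinearOrder A) (u v : A → ℚ) : Prop :=
  lexLe t u v ∧ u ≠ v

/-!
Fix `i₀` and argue by descending induction on `a ∈ Γ` for `≤_{i₀}`. Among the `f` with
`V_{i₀}(f) = a` choose one whose vector `(V_i(f))_i` is maximal for the product of the orders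
`≤_i`. If `V_j(f) = b ≠ a` for some `j`, then `a <_{i₀} b` by (Q4), so by induction `b = V_i(g)`
for all `i`. By (Q3), `h = f - c • g` has `V_j(h) >_j V_j(f)`; since `V_i(f) ≤_i b = V_i(c • g)`
for every `i`, (Q2) gives `V_i(h) ≥_i V_i(f)` for all `i`, with equality at `i₀` because
`V_{i₀}(f) <_{i₀} b`. This contradicts the maximality of `f`.
-/

section LexFun

variable {A : Type*}

/-- A copy of `ℚ^A` carrying `≤_t`, which is the colexicographic order `Colex` for `t`. -/
def LexFun (_ : LinearOrder A) : Type _ := Colex (A → ℚ)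

instance (t : LinearOrder A) : PartialOrder (LexFun t) :=
  letI := t
  inferInstanceAs (PartialOrder (Colex (A → ℚ)))

def toLexFun (t : LinearOrder A) : (A → ℚ) ≃ LexFun t := toColex

theorem toLexFun_le_toLexFun_iff {t : LinearOrder A} {u v : A → ℚ} :
    toLexFun t u ≤ toLexFun t v ↔ lexLe t u v := by
  rw [le_iff_eq_or_lt, EmbeddingLike.apply_eq_iff_eq]
  exact or_congr Iff.rfl (exists_congr fun _ => and_comm)

theorem toLexFun_lt_toLexFun_iff {t : LinearOrder A} {u v : A → ℚ} :
    toLexFun t u < toLexFun t v ↔ lexLt t u v := by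
  rw [lt_iff_le_and_ne, toLexFun_le_toLexFun_iff, Ne, EmbeddingLike.apply_eq_iff_eq]
  rfl

end LexFun

/-- Axioms (Q1) and (Q2) for a map `v` defined on the nonzero vectors of `W`. -/
structure IsQuasiValuation (K : Type*) {W β : Type*} [Field K] [AddCommGroup W] [Module K W]
    [PartialOrder β] (v : W → β) : Prop where
  map_smul : ∀ (c : K) (f : W), c ≠ 0 → f ≠ 0 → v (c • f) = v f
  le_map_add : ∀ f g : W, f ≠ 0 → g ≠ 0 → f + g ≠ 0 → v f ≤ v (f + g) ∨ v g ≤ v (f + g)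

namespace IsQuasiValuation

variable {K W β : Type*} [Field K] [AddCommGroup W] [Module K W] [PartialOrder β] {v : W → β}

theorem map_neg (hv : IsQuasiValuation K v) {f : W} (hf : f ≠ 0) : v (-f) = v f := by
  simpa using hv.map_smul (-1) f (by norm_num) hf

theorem le_map_sub (hv : IsQuasiValuation K v) {f g : W} (hf : f ≠ 0) (hg : g ≠ 0)
    (hfg : f - g ≠ 0) (hle : v f ≤ v g) : v f ≤ v (f - g) := by
  have h := hv.le_map_add f (-g) hf (neg_ne_zero.2 hg) (by rwa [← sub_eq_add_neg])
  rw [← sub_eq_add_neg, hv.map_neg hg] at h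
  exact h.elim id hle.trans

theorem map_sub_of_lt (hv : IsQuasiValuation K v) {f g : W} (hf : f ≠ 0) (hg : g ≠ 0)
    (hfg : f - g ≠ 0) (hlt : v f < v g) : v (f - g) = v f := by
  refine le_antisymm ?_ (hv.le_map_sub hf hg hfg hlt.le)
  have h := hv.le_map_add (f - g) g hfg hg (by rwa [sub_add_cancel])
  rw [sub_add_cancel] at h
  exact h.resolve_right hlt.not_ge

end IsQuasiValuation

section CommonLeaf

variable {K W A ι : Type*} [Field K] [AddCommGroup W] [Module K W]
  {t : ι → LinearOrder A} {V : ι → W → A → ℚ}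

theorem exists_lt_of_forall_eq (hv : ∀ i, IsQuasiValuation K fun f => toLexFun (t i) (V i f))
    (Q3 : ∀ (i : ι) (f g : W), f ≠ 0 → g ≠ 0 → V i f = V i g →
      ∃ c : K, c ≠ 0 ∧ (f = c • g ∨ (f - c • g ≠ 0 ∧ lexLt (t i) (V i f) (V i (f - c • g)))))
    (Q4 : ∀ (i j : ι) (f : W), f ≠ 0 → lexLe (t i) (V i f) (V j f))
    {f g : W} (hf : f ≠ 0) (hg : g ≠ 0) {i₀ j : ι} (hfj : V i₀ f ≠ V j f)
    (hgf : ∀ i, V i g = V j f) :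
    ∃ h ≠ 0, V i₀ h = V i₀ f ∧
      (fun i => toLexFun (t i) (V i f)) < fun i => toLexFun (t i) (V i h) := by
  have hcg (c : K) (hc : c ≠ 0) (i : ι) : V i (c • g) = V j f :=
    (toLexFun (t i)).injective ((hv i).map_smul c g hc hg) |>.trans (hgf i)
  obtain ⟨c, hc, hfg | ⟨hh, hlt⟩⟩ := Q3 j f g hf hg (hgf j).symm
  · exact absurd (hfg ▸ hcg c hc i₀) hfj
  have hcg0 : c • g ≠ 0 := smul_ne_zero hc hg
  have hle (i : ι) : toLexFun (t i) (V i f) ≤ toLexFun (t i) (V i (c • g)) := by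
    rw [hcg c hc i, toLexFun_le_toLexFun_iff]
    exact Q4 i j f hf
  refine ⟨f - c • g, hh, ?_, Pi.lt_def.2 ⟨fun i => (hv i).le_map_sub hf hcg0 hh (hle i),
    j, toLexFun_lt_toLexFun_iff.2 hlt⟩⟩
  refine (toLexFun (t i₀)).injective ((hv i₀).map_sub_of_lt hf hcg0 hh ?_)
  refine (hle i₀).lt_of_ne ?_
  rwa [Ne, EmbeddingLike.apply_eq_iff_eq, hcg c hc]

theorem exists_forall_eq_of_forall_lt [Finite ι]
    (hv : ∀ i, IsQuasiValuation K fun f => toLexFun (t i) (V i f))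
    (Q3 : ∀ (i : ι) (f g : W), f ≠ 0 → g ≠ 0 → V i f = V i g →
      ∃ c : K, c ≠ 0 ∧ (f = c • g ∨ (f - c • g ≠ 0 ∧ lexLt (t i) (V i f) (V i (f - c • g)))))
    (Q4 : ∀ (i j : ι) (f : W), f ≠ 0 → lexLe (t i) (V i f) (V j f))
    {Γ : Set (A → ℚ)} (hΓ : Γ.Finite) (hV : ∀ i, V i '' {f : W | f ≠ 0} = Γ) {i₀ : ι}
    {a : A → ℚ} (ha : a ∈ Γ)
    (ih : ∀ b ∈ Γ, toLexFun (t i₀) a < toLexFun (t i₀) b → ∃ g : W, g ≠ 0 ∧ ∀ i, V i g = b) :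
    ∃ f : W, f ≠ 0 ∧ ∀ i, V i f = a := by
  have hVΓ (i : ι) {f : W} (hf : f ≠ 0) : V i f ∈ Γ := hV i ▸ mem_image_of_mem _ hf
  have hfin : ((fun f i => toLexFun (t i) (V i f)) '' {f | f ≠ 0 ∧ V i₀ f = a}).Finite :=
    (Finite.pi fun i => hΓ.image (toLexFun (t i))).subset <| by
      rintro _ ⟨f, ⟨hf, -⟩, rfl⟩ i -
      exact mem_image_of_mem _ (hVΓ i hf)
  obtain ⟨f, ⟨hf, hfa⟩, hfmax⟩ := hfin.exists_maximalFor' _ _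
    ((hV i₀).symm ▸ ha : a ∈ V i₀ '' {f | f ≠ 0})
  refine ⟨f, hf, ?_⟩
  by_contra! ⟨j, hj⟩
  have hab : toLexFun (t i₀) a < toLexFun (t i₀) (V j f) := by
    refine lt_of_le_of_ne (hfa ▸ toLexFun_le_toLexFun_iff.2 (Q4 i₀ j f hf)) ?_
    rw [Ne, EmbeddingLike.apply_eq_iff_eq]
    exact Ne.symm hj
  obtain ⟨g, hg, hgb⟩ := ih _ (hVΓ j hf) hab
  obtain ⟨h, hh, hha, hlt⟩ := exists_lt_of_forall_eq hv Q3 Q4 hf hg (hfa ▸ hab.ne) hgb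
  exact hlt.not_ge (hfmax ⟨hh, hha.trans hfa⟩ hlt.le)

end CommonLeaf

theorem common_leaf_basis_general {K W A ι : Type*} [Field K] [AddCommGroup W] [Module K W]
    [Fintype ι] [Nonempty ι]
    (t : ι → LinearOrder A) (V : ι → W → (A → ℚ)) (Γ : Set (A → ℚ))
    (Q1 : ∀ (i : ι) (c : K) (f : W), c ≠ 0 → f ≠ 0 → V i (c • f) = V i f)
    (Q2 : ∀ (i : ι) (f g : W), f ≠ 0 → g ≠ 0 → f + g ≠ 0 →
      lexLe (t i) (V i f) (V i (f + g)) ∨ lexLe (t i) (V i g) (V i (f + g)))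
    (Q3 : ∀ (i : ι) (f g : W), f ≠ 0 → g ≠ 0 → V i f = V i g →
      ∃ c : K, c ≠ 0 ∧ (f = c • g ∨
        (f - c • g ≠ 0 ∧ lexLt (t i) (V i f) (V i (f - c • g)))))
    (Q4 : ∀ (i j : ι) (f : W), f ≠ 0 → lexLe (t i) (V i f) (V j f))
    (Q5fin : Γ.Finite) (Q5img : ∀ i, V i '' {f : W | f ≠ 0} = Γ) :
    ∀ a ∈ Γ, ∃ f : W, f ≠ 0 ∧ ∀ i, V i f = a := by
  obtain ⟨i₀⟩ := ‹Nonempty ι›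
  have hv (i : ι) : IsQuasiValuation K fun f => toLexFun (t i) (V i f) :=
    ⟨Q1 i, by simpa only [toLexFun_le_toLexFun_iff] using Q2 i⟩
  by_contra! hbad
  obtain ⟨a, ⟨ha, hna⟩, hmax⟩ :=
    (Q5fin.subset (sep_subset _ _)).exists_maximalFor (toLexFun (t i₀)) _ hbad
  obtain ⟨f, hf, hfa⟩ := exists_forall_eq_of_forall_lt hv Q3 Q4 Q5fin Q5img ha fun b hb hab => by
    by_contra! hnb
    exact hab.not_ge (hmax ⟨hb, hnb⟩ hab.le)
  obtain ⟨i, hi⟩ := hna f hf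
  exact hi (hfa i)

/-- Common leaf basis for a balanced stratification: let `K` be a field, `W` a `K`-vector
space, `A` a finite set, and `t i`, `i` in a nonempty finite index set, a family of linear
orders on `A` (the family `F`). Suppose for each `i` we have `V i : W \ {0} → ℚ^A` with
(Q1) invariance under nonzero scalars, (Q2) the quasi-valuation minimum inequality,
(Q3) one-dimensional leaves, (Q4) `V i f ≤_{t i} V j f` for all `i, j`, and
(Q5) a common finite image `Γ`. Then for every `a ∈ Γ` there is a nonzero `f ∈ W` with
`V i f = a` for every `i`. -/
theorem common_leaf_basis {K W A ι : Type*} [Field K] [AddCommGroup W] [Module K W]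
    [Fintype A] [Fintype ι] [Nonempty ι]
    (t : ι → LinearOrder A) (V : ι → W → (A → ℚ)) (Γ : Set (A → ℚ))
    (Q1 : ∀ (i : ι) (c : K) (f : W), c ≠ 0 → f ≠ 0 → V i (c • f) = V i f)
    (Q2 : ∀ (i : ι) (f g : W), f ≠ 0 → g ≠ 0 → f + g ≠ 0 →
      lexLe (t i) (V i f) (V i (f + g)) ∨ lexLe (t i) (V i g) (V i (f + g)))
    (Q3 : ∀ (i : ι) (f g : W), f ≠ 0 → g ≠ 0 → V i f = V i g →
      ∃ c : K, c ≠ 0 ∧ (f = c • g ∨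
        (f - c • g ≠ 0 ∧ lexLt (t i) (V i f) (V i (f - c • g)))))
    (Q4 : ∀ (i j : ι) (f : W), f ≠ 0 → lexLe (t i) (V i f) (V j f))
    (Q5fin : Γ.Finite) (Q5img : ∀ i, V i '' {f : W | f ≠ 0} = Γ) :
    ∀ a ∈ Γ, ∃ f : W, f ≠ 0 ∧ ∀ i, V i f = a :=
  common_leaf_basis_general t V Γ Q1 Q2 Q3 Q4 Q5fin Q5img
end

section
/- Assume hypotheses (Q1)–(Q5) and write F = {t_1, ..., t_M} with M ≥ 2. Let a, a' ∈ Γ with a ≠ a'. Suppose f ∈ W \ {0} satisfies V_{t_j}(f) = a for j = 1, ..., M−1 and V_{t_M}(f) = a', and suppose g ∈ W \ {0} satisfies V_{t_j}(g) = a' for every j = 1, ..., M. Then there exists a nonzero c ∈ K such that the element f̃ := f − c·g is nonzero and satisfies: V_{t_j}(f̃) = a for j = 1, ..., M−1, and a' <_{t_M} V_{t_M}(f̃) ≤_{t_M} a. (This is the correction step in the inductive construction of a common representative for a leaf of the quasi-valuations of a balanced Seshadri stratification.) -/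
/-!
Apply the one-dimensional leaf property (Q3) for the last order to `f` and `g`, which have the
same value there; `f = c g` is impossible since the first order separates them, so we obtain
`c` with `V_M (f - c g) > V_M f = a'`. On every other order `V_j f = a <_j a' = V_j (c g)` by Q4,
and in a quasi-valuation the strictly smaller value survives subtraction, so
`V_j (f - c g) = a`; Q4 then bounds `V_M (f - c g)` by `a`.
-/
section LexOrder

variable {A : Type*} (t : LinearOrder A) {u v w : A → ℚ}

theorem lexLe_trans (huv : lexLe t u v) (hvw : lexLe t v w) : lexLe t u w := by
  let _ := t
  rcases huv with rfl | ⟨p, hp, hpu⟩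
  · exact hvw
  rcases hvw with rfl | ⟨p', hp', hpv⟩
  · exact Or.inr ⟨p, hp, hpu⟩
  rcases lt_trichotomy p p' with h | rfl | h
  · exact Or.inr ⟨p', hpu p' h ▸ hp', fun q hq => (hpu q (h.trans hq)).trans (hpv q hq)⟩
  · exact Or.inr ⟨p, hp.trans hp', fun q hq => (hpu q hq).trans (hpv q hq)⟩
  · exact Or.inr ⟨p, (hpv p h).symm ▸ hp, fun q hq => (hpu q hq).trans (hpv q (h.trans hq))⟩

theorem lexLe_antisymm (huv : lexLe t u v) (hvu : lexLe t v u) : u = v := by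
  let _ := t
  rcases huv with rfl | ⟨p, hp, hpu⟩
  · rfl
  rcases hvu with rfl | ⟨p', hp', hpv⟩
  · rfl
  exfalso
  rcases lt_trichotomy p p' with h | rfl | h
  · exact (hpu p' h).not_gt hp'
  · exact (hp.trans hp').false
  · exact (hpv p h).not_gt hp

theorem not_lexLe_of_lexLt (huv : lexLt t u v) : ¬ lexLe t v u :=
  fun hvu => huv.2 (lexLe_antisymm t huv.1 hvu)

end LexOrder

section QuasiValuation

variable {A W : Type*} [AddCommGroup W] (t : LinearOrder A) {v : W → A → ℚ}

theorem apply_sub_eq_of_lexLt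
    (hneg : ∀ f, f ≠ 0 → v (-f) = v f)
    (hadd : ∀ f g : W, f ≠ 0 → g ≠ 0 → f + g ≠ 0 →
      lexLe t (v f) (v (f + g)) ∨ lexLe t (v g) (v (f + g)))
    {f g : W} (hf : f ≠ 0) (hg : g ≠ 0) (hfg : f - g ≠ 0) (hlt : lexLt t (v f) (v g)) :
    v (f - g) = v f := by
  have hle : lexLe t (v (f - g)) (v f) := by
    have h := hadd (f - g) g hfg hg (by rwa [sub_add_cancel])
    rw [sub_add_cancel] at h
    exact h.resolve_right (not_lexLe_of_lexLt t hlt)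
  have hge := hadd f (-g) hf (neg_ne_zero.2 hg) (by rwa [← sub_eq_add_neg])
  rw [← sub_eq_add_neg, hneg g hg] at hge
  refine lexLe_antisymm t hle (hge.resolve_right fun hgfg => ?_)
  exact not_lexLe_of_lexLt t hlt (lexLe_trans t hgfg hle)

end QuasiValuation

theorem correction_step_general {K W A : Type*} [Field K] [AddCommGroup W] [Module K W]
    (M : ℕ) (hM : 1 ≤ M)
    (t : Fin (M + 1) → LinearOrder A) (V : Fin (M + 1) → W → (A → ℚ))
    (Q1 : ∀ (i : Fin (M + 1)) (c : K) (f : W), c ≠ 0 → f ≠ 0 → V i (c • f) = V i f)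
    (Q2 : ∀ (i : Fin (M + 1)) (f g : W), f ≠ 0 → g ≠ 0 → f + g ≠ 0 →
      lexLe (t i) (V i f) (V i (f + g)) ∨ lexLe (t i) (V i g) (V i (f + g)))
    (Q3 : ∀ (i : Fin (M + 1)) (f g : W), f ≠ 0 → g ≠ 0 → V i f = V i g →
      ∃ c : K, c ≠ 0 ∧ (f = c • g ∨
        (f - c • g ≠ 0 ∧ lexLt (t i) (V i f) (V i (f - c • g)))))
    (Q4 : ∀ (i j : Fin (M + 1)) (f : W), f ≠ 0 → lexLe (t i) (V i f) (V j f))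
    (a a' : A → ℚ) (hne : a ≠ a')
    (f : W) (hf : f ≠ 0)
    (hfj : ∀ j : Fin (M + 1), j ≠ Fin.last M → V j f = a)
    (hfM : V (Fin.last M) f = a')
    (g : W) (hg : g ≠ 0) (hgj : ∀ j : Fin (M + 1), V j g = a') :
    ∃ c : K, c ≠ 0 ∧ f - c • g ≠ 0 ∧
      (∀ j : Fin (M + 1), j ≠ Fin.last M → V j (f - c • g) = a) ∧
      lexLt (t (Fin.last M)) a' (V (Fin.last M) (f - c • g)) ∧
      lexLe (t (Fin.last M)) (V (Fin.last M) (f - c • g)) a := by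
  have h0 : (0 : Fin (M + 1)) ≠ Fin.last M := by
    simp only [ne_eq, Fin.ext_iff, Fin.val_last, Fin.val_zero]
    omega
  have hVcg : ∀ (j : Fin (M + 1)) {c : K}, c ≠ 0 → V j (c • g) = a' := fun j c hc => by
    rw [Q1 j c g hc hg, hgj]
  obtain ⟨c, hc, rfl | ⟨hfcg, hlt⟩⟩ := Q3 (Fin.last M) f g hf hg (hfM.trans (hgj _).symm)
  · exact absurd ((hfj 0 h0).symm.trans (hVcg 0 hc)) hne
  have hneg : ∀ j (h : W), h ≠ 0 → V j (-h) = V j h := fun j h hh => by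
    rw [← neg_one_smul K h, Q1 j (-1) h (neg_ne_zero.2 one_ne_zero) hh]
  have hrest : ∀ j : Fin (M + 1), j ≠ Fin.last M → V j (f - c • g) = a := fun j hj => by
    have hlt_j : lexLt (t j) (V j f) (V j (c • g)) := by
      rw [hVcg j hc, ← hfM]
      exact ⟨Q4 j _ f hf, by rw [hfj j hj, hfM]; exact hne⟩
    rw [apply_sub_eq_of_lexLt (t j) (hneg j) (Q2 j) hf (smul_ne_zero hc hg) hfcg hlt_j, hfj j hj]
  refine ⟨c, hc, hfcg, hrest, hfM ▸ hlt, ?_⟩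
  simpa only [hrest 0 h0] using Q4 (Fin.last M) 0 (f - c • g) hfcg

/-- The correction step in the construction of a common leaf representative.
The family of linear orders is `t 0, …, t (Fin.last M)` with `M ≥ 1`, so it has
`M + 1 ≥ 2` members (`t (Fin.last M)` playing the role of `t_M` and the others of
`t_1, …, t_{M-1}` in the paper). Under (Q1)–(Q5), if `a ≠ a'` in `Γ`, `f ≠ 0` has
`V j f = a` for all `j ≠ Fin.last M` and `V (Fin.last M) f = a'`, and `g ≠ 0` has
`V j g = a'` for all `j`, then there is `c ≠ 0` such that `f - c • g` is nonzero,
`V j (f - c • g) = a` for all `j ≠ Fin.last M`, and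
`a' <_{t (Fin.last M)} V (Fin.last M) (f - c • g) ≤_{t (Fin.last M)} a`. -/
theorem correction_step {K W A : Type*} [Field K] [AddCommGroup W] [Module K W] [Fintype A]
    (M : ℕ) (hM : 1 ≤ M)
    (t : Fin (M + 1) → LinearOrder A) (V : Fin (M + 1) → W → (A → ℚ)) (Γ : Set (A → ℚ))
    (Q1 : ∀ (i : Fin (M + 1)) (c : K) (f : W), c ≠ 0 → f ≠ 0 → V i (c • f) = V i f)
    (Q2 : ∀ (i : Fin (M + 1)) (f g : W), f ≠ 0 → g ≠ 0 → f + g ≠ 0 →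
      lexLe (t i) (V i f) (V i (f + g)) ∨ lexLe (t i) (V i g) (V i (f + g)))
    (Q3 : ∀ (i : Fin (M + 1)) (f g : W), f ≠ 0 → g ≠ 0 → V i f = V i g →
      ∃ c : K, c ≠ 0 ∧ (f = c • g ∨
        (f - c • g ≠ 0 ∧ lexLt (t i) (V i f) (V i (f - c • g)))))
    (Q4 : ∀ (i j : Fin (M + 1)) (f : W), f ≠ 0 → lexLe (t i) (V i f) (V j f))
    (Q5fin : Γ.Finite) (Q5img : ∀ i, V i '' {f : W | f ≠ 0} = Γ)
    (a a' : A → ℚ) (haΓ : a ∈ Γ) (ha'Γ : a' ∈ Γ) (hne : a ≠ a')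
    (f : W) (hf : f ≠ 0)
    (hfj : ∀ j : Fin (M + 1), j ≠ Fin.last M → V j f = a)
    (hfM : V (Fin.last M) f = a')
    (g : W) (hg : g ≠ 0) (hgj : ∀ j : Fin (M + 1), V j g = a') :
    ∃ c : K, c ≠ 0 ∧ f - c • g ≠ 0 ∧
      (∀ j : Fin (M + 1), j ≠ Fin.last M → V j (f - c • g) = a) ∧
      lexLt (t (Fin.last M)) a' (V (Fin.last M) (f - c • g)) ∧
      lexLe (t (Fin.last M)) (V (Fin.last M) (f - c • g)) a :=
  correction_step_general M hM t V Q1 Q2 Q3 Q4 a a' hne f hf hfj hfM g hg hgj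
end

section
/- Let b_0, ..., b_r be positive integers, L(b) the associated LS-lattice, and LS⁺(b) := L(b) ∩ ℚ^{r+1}_{≥0} the submonoid of componentwise-nonnegative elements of L(b). Then the subgroup of ℚ^{r+1} generated by LS⁺(b) equals L(b); consequently the monoid LS⁺(b) is saturated: every componentwise-nonnegative element of the subgroup generated by LS⁺(b) already lies in LS⁺(b). (Once the fan of monoids of the quasi-valuation of the Seshadri stratification of a Schubert variety is identified with the fan of LS-monoids, this saturation is exactly the normality of the stratification.) -/
/-!
Every `a ∈ L(b)` is the difference `(a + v) - v` of two elements of `LS⁺(b)`, where `v` is the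
natural-number vector `k ↦ ⌈-a k⌉₊`: integer vectors lie in `L(b)`, and `v` is large enough to
make `a + v` nonnegative. Saturation is then immediate, since `LS⁺(b)` is by definition the
nonnegative part of `L(b)`.
-/

/-- The Lakshmibai–Seshadri lattice associated to positive integers `b 0, …, b r`:
all `(a 0, …, a r) ∈ ℚ^{r+1}` such that `b j * (a j + a (j+1) + ⋯ + a r) ∈ ℤ`
for every `j`. -/
def LSlattice (r : ℕ) (b : Fin (r + 1) → ℕ) : Set (Fin (r + 1) → ℚ) :=
  {a | ∀ j : Fin (r + 1), ∃ m : ℤ, (b j : ℚ) * (∑ k ∈ Finset.Ici j, a k) = (m : ℚ)}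

/-- The LS-monoid `LS⁺(b)`: the componentwise-nonnegative elements of the LS-lattice. -/
def LSmonoid (r : ℕ) (b : Fin (r + 1) → ℕ) : Set (Fin (r + 1) → ℚ) :=
  LSlattice r b ∩ {a | ∀ k, 0 ≤ a k}

theorem AddSubgroup.closure_inter_nonneg_eq {M : Type*} [AddGroup M] [LE M] (G : AddSubgroup M)
    (h : ∀ a ∈ G, ∃ v ∈ G, 0 ≤ v ∧ 0 ≤ a + v) :
    AddSubgroup.closure ((G : Set M) ∩ {x | 0 ≤ x}) = G := by
  refine le_antisymm ((AddSubgroup.closure_le _).mpr Set.inter_subset_left) fun a ha => ?_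
  obtain ⟨v, hv, hv_nonneg, hav_nonneg⟩ := h a ha
  have hav : a + v ∈ AddSubgroup.closure ((G : Set M) ∩ {x | 0 ≤ x}) :=
    AddSubgroup.subset_closure ⟨G.add_mem ha hv, hav_nonneg⟩
  simpa using sub_mem hav (AddSubgroup.subset_closure ⟨hv, hv_nonneg⟩)

def LSsubgroup (r : ℕ) (b : Fin (r + 1) → ℕ) : AddSubgroup (Fin (r + 1) → ℚ) where
  carrier := LSlattice r b
  zero_mem' j := ⟨0, by simp⟩
  add_mem' {a a'} ha ha' j := by
    obtain ⟨m, hm⟩ := ha j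
    obtain ⟨m', hm'⟩ := ha' j
    exact ⟨m + m', by simp [Finset.sum_add_distrib, mul_add, hm, hm']⟩
  neg_mem' {a} ha j := by
    obtain ⟨m, hm⟩ := ha j
    exact ⟨-m, by simp [Finset.sum_neg_distrib, hm]⟩

theorem natCast_mem_LSlattice (r : ℕ) (b : Fin (r + 1) → ℕ) (f : Fin (r + 1) → ℕ) :
    (fun k => (f k : ℚ)) ∈ LSlattice r b := fun j =>
  ⟨b j * ∑ k ∈ Finset.Ici j, f k, by push_cast; rfl⟩

theorem exists_nonneg_mem_LSlattice_add_nonneg (r : ℕ) (b : Fin (r + 1) → ℕ)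
    (a : Fin (r + 1) → ℚ) :
    ∃ v ∈ LSlattice r b, 0 ≤ v ∧ 0 ≤ a + v :=
  ⟨fun k => (⌈-a k⌉₊ : ℚ), natCast_mem_LSlattice r b _, fun _ => Nat.cast_nonneg _,
    fun k => by simpa [neg_le_iff_add_nonneg, add_comm] using Nat.le_ceil (-a k)⟩

theorem closure_LSmonoid (r : ℕ) (b : Fin (r + 1) → ℕ) :
    AddSubgroup.closure (LSmonoid r b) = LSsubgroup r b :=
  (LSsubgroup r b).closure_inter_nonneg_eq fun a _ =>
    exists_nonneg_mem_LSlattice_add_nonneg r b a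

theorem LSmonoid_generates_and_saturated_general (r : ℕ) (b : Fin (r + 1) → ℕ) :
    ((AddSubgroup.closure (LSmonoid r b) : AddSubgroup (Fin (r + 1) → ℚ)) : Set _) =
        LSlattice r b ∧
    ∀ a : Fin (r + 1) → ℚ, a ∈ AddSubgroup.closure (LSmonoid r b) →
      (∀ k, 0 ≤ a k) → a ∈ LSmonoid r b := by
  rw [closure_LSmonoid]
  exact ⟨rfl, fun a ha ha_nonneg => ⟨ha, ha_nonneg⟩⟩

/-- The subgroup of `ℚ^{r+1}` generated by the LS-monoid `LS⁺(b)` is the whole LS-lattice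
`L(b)`; consequently the monoid `LS⁺(b)` is saturated: every componentwise-nonnegative
element of the subgroup generated by `LS⁺(b)` already lies in `LS⁺(b)`. -/
theorem LSmonoid_generates_and_saturated (r : ℕ) (b : Fin (r + 1) → ℕ)
    (hb : ∀ j, 0 < b j) :
    ((AddSubgroup.closure (LSmonoid r b) : AddSubgroup (Fin (r + 1) → ℚ)) : Set _) =
        LSlattice r b ∧
    ∀ a : Fin (r + 1) → ℚ, a ∈ AddSubgroup.closure (LSmonoid r b) →
      (∀ k, 0 ≤ a k) → a ∈ LSmonoid r b :=
  LSmonoid_generates_and_saturated_general r b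
end
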